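/- Assume b > 0 and that there exists N* > 0 with N*·I(N*) = 1 such that N < 1/I(N) for every N ≥ 0 with N ≠ N*. Then for any firing rate sequence {N_{k,∞}}: if N_{0,∞} > N* the sequence is monotone increasing and tends to +∞, and if N_{0,∞} ≤ N* the sequence is monotone increasing and converges to N*. -/

import Mathlib

/-!
For `b ≥ 0` the integrand of `I(N)` is pointwise antitone in `N` (the exponent
`((w - bN)² - (v - bN)²)/2` decreases in `N` since `v ≤ w`), so `G = 1/I` is monotone, and by
dominated convergence it is continuous. An orbit of a continuous monotone map lying above the
diagonal increases, and a finite limit is a fixed point, hence `N*`. Starting below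
`N*` the orbit stays below `G N* = N*`, and starting above it there is no finite limit.
-/

open MeasureTheory Real Filter

/-- The function `I(N)` from the NNLIF model. -/
noncomputable def Ifun (b V_R V_F N : ℝ) : ℝ :=
  ∫ v in Set.Iic V_F,
    Real.exp (-(v - b * N) ^ 2 / 2) * ∫ w in (max v V_R)..V_F, Real.exp ((w - b * N) ^ 2 / 2)

noncomputable def ifunIntegrand (b V_R V_F N v : ℝ) : ℝ :=
  Real.exp (-(v - b * N) ^ 2 / 2) * ∫ w in (max v V_R)..V_F, Real.exp ((w - b * N) ^ 2 / 2)

section Integrand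

variable {b V_R V_F N v : ℝ}

lemma ifunIntegrand_nonneg (hV : V_R ≤ V_F) (hv : v ≤ V_F) : 0 ≤ ifunIntegrand b V_R V_F N v :=
  mul_nonneg (exp_pos _).le <|
    intervalIntegral.integral_nonneg (max_le hv hV) fun _ _ ↦ (exp_pos _).le

lemma ifunIntegrand_pos (hV : V_R < V_F) (hv : v < V_F) : 0 < ifunIntegrand b V_R V_F N v :=
  mul_pos (exp_pos _) <| intervalIntegral.intervalIntegral_pos_of_pos_on
    (Continuous.intervalIntegrable (by fun_prop) _ _) (fun _ _ ↦ exp_pos _) (max_lt hv hV)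

lemma ifunIntegrand_le (hV : V_R ≤ V_F) (hv : v ≤ V_F) :
    ifunIntegrand b V_R V_F N v ≤
      (∫ w in V_R..V_F, exp ((w - b * N) ^ 2 / 2)) * exp (-(v - b * N) ^ 2 / 2) := by
  rw [ifunIntegrand, mul_comm]
  gcongr
  exact intervalIntegral.integral_mono_interval (le_max_right v V_R) (max_le hv hV) le_rfl
    (ae_of_all _ fun _ ↦ (exp_pos _).le) (Continuous.intervalIntegrable (by fun_prop) _ _)

lemma continuous_ifunIntegrand (b V_R V_F : ℝ) :
    Continuous fun p : ℝ × ℝ ↦ ifunIntegrand b V_R V_F p.1 p.2 := by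
  unfold ifunIntegrand
  simp_rw [intervalIntegral.integral_symm V_F]
  fun_prop

lemma integrableOn_ifunIntegrand (hV : V_R ≤ V_F) (b N : ℝ) :
    IntegrableOn (ifunIntegrand b V_R V_F N) (Set.Iic V_F) := by
  have gaussian : Integrable fun v : ℝ ↦ exp (-(v - b * N) ^ 2 / 2) := by
    simpa [neg_div, div_eq_inv_mul, ← neg_mul] using
      (integrable_exp_neg_mul_sq (b := 1 / 2) (by norm_num)).comp_sub_right (b * N)
  refine Integrable.mono'
    (gaussian.const_mul (∫ w in V_R..V_F, exp ((w - b * N) ^ 2 / 2))).integrableOn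
    ((continuous_ifunIntegrand b V_R V_F).comp (Continuous.prodMk_right N)).aestronglyMeasurable ?_
  refine (ae_restrict_iff' measurableSet_Iic).mpr (ae_of_all _ fun v hv ↦ ?_)
  rw [norm_of_nonneg (ifunIntegrand_nonneg hV hv)]
  exact ifunIntegrand_le hV hv

lemma antitone_ifunIntegrand (hV : V_R ≤ V_F) (hb : 0 ≤ b) (hv : v ≤ V_F) :
    Antitone fun N ↦ ifunIntegrand b V_R V_F N v := by
  intro N₁ N₂ hN
  dsimp only
  have hexp : ∀ N, ifunIntegrand b V_R V_F N v =
      ∫ w in (max v V_R)..V_F, exp (-(v - b * N) ^ 2 / 2 + (w - b * N) ^ 2 / 2) := by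
    intro N
    simp_rw [ifunIntegrand, ← intervalIntegral.integral_const_mul, ← exp_add]
  rw [hexp, hexp]
  refine intervalIntegral.integral_mono_on (max_le hv hV)
    (Continuous.intervalIntegrable (by fun_prop) _ _)
    (Continuous.intervalIntegrable (by fun_prop) _ _) fun w hw ↦ exp_le_exp.mpr ?_
  have hvw : v ≤ w := (le_max_left v V_R).trans hw.1
  nlinarith [mul_nonneg (mul_nonneg (sub_nonneg.mpr hvw) hb) (sub_nonneg.mpr hN)]

end Integrand

section Ifun

variable {b V_R V_F : ℝ}

lemma Ifun_eq_integral_ifunIntegrand (N : ℝ) :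
    Ifun b V_R V_F N = ∫ v in Set.Iic V_F, ifunIntegrand b V_R V_F N v := rfl

lemma Ifun_pos (hV : V_R < V_F) (N : ℝ) : 0 < Ifun b V_R V_F N := by
  rw [Ifun_eq_integral_ifunIntegrand, setIntegral_pos_iff_support_of_nonneg_ae
    ((ae_restrict_iff' measurableSet_Iic).mpr
      (ae_of_all _ fun v hv ↦ ifunIntegrand_nonneg hV.le hv))
    (integrableOn_ifunIntegrand hV.le b N)]
  have hsupp : Set.Iio V_F ⊆ Function.support (ifunIntegrand b V_R V_F N) ∩ Set.Iic V_F :=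
    fun v (hv : v < V_F) ↦ ⟨(ifunIntegrand_pos hV hv).ne', hv.le⟩
  exact (measure_mono hsupp).trans_lt' (by simp [Real.volume_Iio])

lemma antitone_Ifun (hV : V_R ≤ V_F) (hb : 0 ≤ b) : Antitone (Ifun b V_R V_F) :=
  fun _ _ hN ↦ setIntegral_mono_on (integrableOn_ifunIntegrand hV b _)
    (integrableOn_ifunIntegrand hV b _) measurableSet_Iic
    fun _ hv ↦ antitone_ifunIntegrand hV hb hv hN

-- For `N` near `N₀` the integrand is dominated by its value at `N₀ - 1`, by monotonicity in `N`.
lemma continuous_Ifun (hV : V_R ≤ V_F) (hb : 0 ≤ b) : Continuous (Ifun b V_R V_F) := by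
  show Continuous fun N ↦ ∫ v in Set.Iic V_F, ifunIntegrand b V_R V_F N v
  refine continuous_iff_continuousAt.mpr fun N₀ ↦ continuousAt_of_dominated
    (bound := ifunIntegrand b V_R V_F (N₀ - 1)) ?_ ?_ (integrableOn_ifunIntegrand hV b _) ?_
  · exact .of_forall fun N ↦ ((continuous_ifunIntegrand b V_R V_F).comp
      (Continuous.prodMk_right N)).aestronglyMeasurable
  · filter_upwards [Ioi_mem_nhds (sub_one_lt N₀)] with N hN
    refine (ae_restrict_iff' measurableSet_Iic).mpr (ae_of_all _ fun v hv ↦ ?_)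
    rw [norm_of_nonneg (ifunIntegrand_nonneg hV hv)]
    exact antitone_ifunIntegrand hV hb hv (le_of_lt hN)
  · exact ae_of_all _ fun v ↦ ((continuous_ifunIntegrand b V_R V_F).comp
      (Continuous.prodMk_left v)).continuousAt

end Ifun

section Iteration

variable {f : ℝ → ℝ} {a p x₀ : ℝ}

lemma eq_of_tendsto_iterate_of_lt_map (hf : Continuous f)
    (hside : ∀ x, a ≤ x → x ≠ p → x < f x) (hx₀ : ∀ n, a ≤ f^[n] x₀) {L : ℝ}
    (hL : Tendsto (fun n ↦ f^[n] x₀) atTop (nhds L)) : L = p := by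
  by_contra hLp
  have hfix : f L = L := isFixedPt_of_tendsto_iterate hL hf.continuousAt
  exact (hside L (ge_of_tendsto' hL hx₀) hLp).ne' hfix

theorem Monotone.tendsto_iterate_of_lt_map (hf : Monotone f) (hfc : Continuous f) (hp : f p = p)
    (hside : ∀ x, a ≤ x → x ≠ p → x < f x) (ha : a ≤ x₀) :
    (p < x₀ → Monotone (fun n ↦ f^[n] x₀) ∧ Tendsto (fun n ↦ f^[n] x₀) atTop atTop) ∧
    (x₀ ≤ p → Monotone (fun n ↦ f^[n] x₀) ∧ Tendsto (fun n ↦ f^[n] x₀) atTop (nhds p)) := by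
  have hle : x₀ ≤ f x₀ := by
    rcases eq_or_ne x₀ p with rfl | hne
    · exact hp.ge
    · exact (hside x₀ ha hne).le
  have hmono : Monotone fun n ↦ f^[n] x₀ := hf.monotone_iterate_of_le_map hle
  have hlower : ∀ n, a ≤ f^[n] x₀ := fun n ↦ ha.trans (hmono n.zero_le)
  refine ⟨fun hpx ↦ ⟨hmono, ?_⟩, fun hxp ↦ ⟨hmono, ?_⟩⟩
  · refine (tendsto_atTop_of_monotone hmono).resolve_right fun ⟨L, hL⟩ ↦ hpx.not_ge ?_
    rw [← eq_of_tendsto_iterate_of_lt_map hfc hside hlower hL]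
    exact ge_of_tendsto' hL fun n ↦ hmono n.zero_le
  · have hupper : ∀ n, f^[n] x₀ ≤ p := fun n ↦
      (hf.iterate n hxp).trans_eq (Function.iterate_fixed hp n)
    obtain h | ⟨L, hL⟩ := tendsto_atTop_of_monotone hmono
    · obtain ⟨n, hn⟩ := (h.eventually_gt_atTop p).exists
      exact absurd (hupper n) hn.not_ge
    · rwa [← eq_of_tendsto_iterate_of_lt_map hfc hside hlower hL]

end Iteration

noncomputable def firingRateMap (b V_R V_F N : ℝ) : ℝ := 1 / Ifun b V_R V_F N

lemma monotone_firingRateMap {b V_R V_F : ℝ} (hV : V_R < V_F) (hb : 0 ≤ b) :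
    Monotone (firingRateMap b V_R V_F) :=
  fun _ _ hN ↦ one_div_le_one_div_of_le (Ifun_pos hV _) (antitone_Ifun hV.le hb hN)

lemma continuous_firingRateMap {b V_R V_F : ℝ} (hV : V_R < V_F) (hb : 0 ≤ b) :
    Continuous (firingRateMap b V_R V_F) :=
  continuous_const.div (continuous_Ifun hV.le hb) fun N ↦ (Ifun_pos hV N).ne'

theorem firingRateSeq_tangent_case_general (b V_R V_F : ℝ) (hV : V_R < V_F) (hb : 0 < b)
    (Nstar : ℝ)
    (hfix : Nstar * Ifun b V_R V_F Nstar = 1)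
    (hside : ∀ N : ℝ, 0 ≤ N → N ≠ Nstar → N < 1 / Ifun b V_R V_F N)
    (Nseq : ℕ → ℝ) (h0 : 0 ≤ Nseq 0)
    (hrec : ∀ k : ℕ, Nseq (k + 1) = 1 / Ifun b V_R V_F (Nseq k)) :
    (Nstar < Nseq 0 →
      Monotone Nseq ∧ Tendsto Nseq atTop atTop) ∧
    (Nseq 0 ≤ Nstar →
      Monotone Nseq ∧ Tendsto Nseq atTop (nhds Nstar)) := by
  have hNseq : Nseq = fun n ↦ (firingRateMap b V_R V_F)^[n] (Nseq 0) := by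
    funext n
    induction n with
    | zero => rfl
    | succ n ih => rw [hrec, Function.iterate_succ_apply', ← ih]; rfl
  have hNstar : firingRateMap b V_R V_F Nstar = Nstar := (eq_one_div_of_mul_eq_one_left hfix).symm
  rw [hNseq]
  exact (monotone_firingRateMap hV hb.le).tendsto_iterate_of_lt_map
    (continuous_firingRateMap hV hb.le) hNstar hside h0

/-- Case 1(b) of Theorem 2.3: `b > 0`, one equilibrium `N*`, with `1/I` staying on one side
of the diagonal (`N < 1/I(N)` for `N ≠ N*`). Firing rate sequences starting above `N*`
increase and diverge to `+∞`, and those starting below `N*` increase to `N*`. -/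
theorem firingRateSeq_tangent_case (b V_R V_F : ℝ) (hV : V_R < V_F) (hb : 0 < b)
    (Nstar : ℝ) (hNstar : 0 < Nstar)
    (hfix : Nstar * Ifun b V_R V_F Nstar = 1)
    (hside : ∀ N : ℝ, 0 ≤ N → N ≠ Nstar → N < 1 / Ifun b V_R V_F N)
    (Nseq : ℕ → ℝ) (h0 : 0 ≤ Nseq 0)
    (hrec : ∀ k : ℕ, Nseq (k + 1) = 1 / Ifun b V_R V_F (Nseq k)) :
    (Nstar < Nseq 0 →
      Monotone Nseq ∧ Tendsto Nseq atTop atTop) ∧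
    (Nseq 0 ≤ Nstar →
      Monotone Nseq ∧ Tendsto Nseq atTop (nhds Nstar)) :=
  firingRateSeq_tangent_case_general b V_R V_F hV hb Nstar hfix hside Nseq h0 hrec
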